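/- In the support-list GAC scheme, a value v is in the valid domain of x_i (i.e., (x_i, v) has support in the MDD) if and only if either the support set s_{i,v} of valid edges e with s(e)=i, v(e)=v is nonempty, or there is a valid long edge skipping layer i. Hence (x_i,v) loses support exactly when s_{i,v} becomes empty and no valid long edge skips layer i. -/

import Mathlib

/-!
A solution path covers layer `i` either by an edge leaving layer `i`, labelled with the value of
`x i`, or by a long edge skipping it; the root lies in layer 1, so no layer precedes it. Conversely,
any root-to-terminal path through a valid edge of the required kind induces a solution: read the
value of each layer off the path edge leaving it, and take an arbitrary domain value for layers
that the path skips. Every layer between root and terminal is crossed by some edge of the path, so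
this assignment is supported.
-/

/-- A path in a labeled multigraph: `Reaches E u Q w` means the list of edges `Q`
(each edge a triple (source, value label, destination)) forms a path from `u` to `w`. -/
inductive Reaches {V : Type} (E : Finset (V × ℕ × V)) : V → List (V × ℕ × V) → V → Prop
  | nil (u : V) : Reaches E u [] u
  | cons {u c w : V} {v : ℕ} {Q : List (V × ℕ × V)} :
      (u, v, c) ∈ E → Reaches E c Q w → Reaches E u ((u, v, c) :: Q) w

/-- The set of solutions of an MDD with long-edge semantics: a full assignment
`ρ` (with `ρ i ∈ D i` for `1 ≤ i ≤ n`) is a solution iff there is a root-to-terminal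
path `Q` such that for each layer `i` either some edge of `Q` leaves layer `i` with
label `ρ i`, or `i` is earlier than the root's layer, or some (long) edge of `Q`
strictly skips layer `i`. -/
def Sols {V : Type} (n : ℕ) (D : ℕ → Finset ℕ) (E : Finset (V × ℕ × V))
    (layer : V → ℕ) (root terminal : V) : Set (ℕ → ℕ) :=
  { ρ | (∀ i ∈ Finset.Icc 1 n, ρ i ∈ D i) ∧
    ∃ Q, Reaches E root Q terminal ∧
      ∀ i ∈ Finset.Icc 1 n,
        (∃ e ∈ Q, layer e.1 = i ∧ e.2.1 = ρ i) ∨ i < layer root ∨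
        (∃ e ∈ Q, layer e.1 < i ∧ i < layer e.2.2) }

/-- An edge is valid iff it lies on some root-to-terminal path of the current MDD. -/
def ValidEdge {V : Type} (E : Finset (V × ℕ × V)) (root terminal : V)
    (e : V × ℕ × V) : Prop :=
  ∃ Q, Reaches E root Q terminal ∧ e ∈ Q

namespace Reaches

variable {V : Type} {E : Finset (V × ℕ × V)} {u w : V} {Q : List (V × ℕ × V)}

theorem mem_of_mem (h : Reaches E u Q w) {e : V × ℕ × V} (he : e ∈ Q) : e ∈ E := by
  induction h with
  | nil => simp at he
  | cons hE _ ih =>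
    rcases List.mem_cons.1 he with rfl | he
    · exact hE
    · exact ih he

theorem exists_mem_layer_le_lt (h : Reaches E u Q w) (layer : V → ℕ) {j : ℕ}
    (hu : layer u ≤ j) (hw : j < layer w) :
    ∃ e ∈ Q, layer e.1 ≤ j ∧ j < layer e.2.2 := by
  induction h with
  | nil => omega
  | @cons u c w v Q _ _ ih =>
    by_cases hc : j < layer c
    · exact ⟨(u, v, c), List.mem_cons_self, hu, hc⟩
    · obtain ⟨e, he, h1, h2⟩ := ih (by omega) hw
      exact ⟨e, List.mem_cons_of_mem _ he, h1, h2⟩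

end Reaches

section PathLabel

variable {V : Type} (layer : V → ℕ) (Q : List (V × ℕ × V)) (σ : ℕ → ℕ)

open Classical in
noncomputable def pathLabel (j : ℕ) : ℕ :=
  if h : ∃ e ∈ Q, layer e.1 = j then h.choose.2.1 else σ j

variable {layer Q σ}

theorem exists_mem_label_eq_pathLabel {j : ℕ} (h : ∃ e ∈ Q, layer e.1 = j) :
    ∃ e ∈ Q, layer e.1 = j ∧ e.2.1 = pathLabel layer Q σ j := by
  rw [pathLabel, dif_pos h]
  exact ⟨h.choose, h.choose_spec.1, h.choose_spec.2, rfl⟩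

theorem pathLabel_mem {E : Finset (V × ℕ × V)} {u w : V} {D : ℕ → Finset ℕ}
    (hQ : Reaches E u Q w) (hlab : ∀ e ∈ E, e.2.1 ∈ D (layer e.1)) {j : ℕ} (hσ : σ j ∈ D j) :
    pathLabel layer Q σ j ∈ D j := by
  by_cases h : ∃ e ∈ Q, layer e.1 = j
  · obtain ⟨e, he, rfl, hval⟩ := exists_mem_label_eq_pathLabel (σ := σ) h
    exact hval ▸ hlab e (hQ.mem_of_mem he)
  · rwa [pathLabel, dif_neg h]

theorem pathLabel_covers {E : Finset (V × ℕ × V)} {root terminal : V}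
    (hQ : Reaches E root Q terminal) {j : ℕ} (hj : j < layer terminal) :
    (∃ e ∈ Q, layer e.1 = j ∧ e.2.1 = pathLabel layer Q σ j) ∨ j < layer root ∨
      (∃ e ∈ Q, layer e.1 < j ∧ j < layer e.2.2) := by
  rcases lt_or_ge j (layer root) with hroot | hroot
  · exact Or.inr (Or.inl hroot)
  obtain ⟨e, he, h1, h2⟩ := hQ.exists_mem_layer_le_lt layer hroot hj
  rcases h1.eq_or_lt with h1 | h1
  · exact Or.inl (exists_mem_label_eq_pathLabel ⟨e, he, h1⟩)
  · exact Or.inr (Or.inr ⟨e, he, h1, h2⟩)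

theorem update_pathLabel_mem_Sols {n : ℕ} {D : ℕ → Finset ℕ} {E : Finset (V × ℕ × V)}
    {root terminal : V} (hQ : Reaches E root Q terminal) (hterm : n < layer terminal)
    (hlab : ∀ e ∈ E, e.2.1 ∈ D (layer e.1)) (hσ : ∀ j ∈ Finset.Icc 1 n, σ j ∈ D j)
    {i v : ℕ} (hv : v ∈ D i)
    (hi : (∃ e ∈ Q, layer e.1 = i ∧ e.2.1 = v) ∨ (∃ e ∈ Q, layer e.1 < i ∧ i < layer e.2.2)) :
    Function.update (pathLabel layer Q σ) i v ∈ Sols n D E layer root terminal := by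
  refine ⟨fun j hj => ?_, Q, hQ, fun j hj => ?_⟩ <;> rcases eq_or_ne j i with rfl | hji
  · simpa using hv
  · simpa [hji] using pathLabel_mem hQ hlab (hσ j hj)
  · simpa using hi.imp_right Or.inr
  · have hj : j < layer terminal := by simp only [Finset.mem_Icc] at hj; omega
    simpa [hji] using pathLabel_covers (σ := σ) hQ hj

end PathLabel

theorem stmt11_general {V : Type} (n : ℕ) (D : ℕ → Finset ℕ) (E : Finset (V × ℕ × V))
    (layer : V → ℕ) (root terminal : V)
    (hlab : ∀ e ∈ E, e.2.1 ∈ D (layer e.1))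
    (hD : ∀ i ∈ Finset.Icc 1 n, (D i).Nonempty)
    (hroot : layer root = 1) (hterm : layer terminal = n + 1)
    (i v : ℕ) (hi : i ∈ Finset.Icc 1 n) (hv : v ∈ D i) :
    (∃ ρ ∈ Sols n D E layer root terminal, ρ i = v) ↔
      ((∃ e, ValidEdge E root terminal e ∧ layer e.1 = i ∧ e.2.1 = v) ∨
        (∃ e, ValidEdge E root terminal e ∧ layer e.1 < i ∧ i < layer e.2.2)) := by
  constructor
  · rintro ⟨ρ, ⟨-, Q, hQ, hcover⟩, rfl⟩
    rcases hcover i hi with ⟨e, he, h1, h2⟩ | hbefore | ⟨e, he, h1, h2⟩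
    · exact Or.inl ⟨e, ⟨Q, hQ, he⟩, h1, h2⟩
    · simp only [Finset.mem_Icc] at hi
      omega
    · exact Or.inr ⟨e, ⟨Q, hQ, he⟩, h1, h2⟩
  · choose! σ hσ using hD
    rintro (⟨e, ⟨Q, hQ, he⟩, h1, h2⟩ | ⟨e, ⟨Q, hQ, he⟩, h1, h2⟩) <;>
      refine ⟨_, update_pathLabel_mem_Sols hQ (by omega) hlab hσ hv ?_, Function.update_self ..⟩
    exacts [Or.inl ⟨e, he, h1, h2⟩, Or.inr ⟨e, he, h1, h2⟩]

/-- In the support-list scheme (with the root in layer 1, so that every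
layer is at or after the root's layer), a value `v ∈ D i` is in the valid domain of `x i`
— i.e. `(x i, v)` has support in the MDD — if and only if either the support set
`s (i,v)` (the valid edges leaving layer `i` with label `v`) is nonempty, or some valid
long edge strictly skips layer `i`.  Hence `(x i, v)` loses support exactly when
`s (i,v)` becomes empty and no valid long edge skips layer `i`. -/
theorem stmt11 {V : Type} (n : ℕ) (D : ℕ → Finset ℕ) (E : Finset (V × ℕ × V))
    (layer : V → ℕ) (root terminal : V)
    (hlt : ∀ e ∈ E, layer e.1 < layer e.2.2)
    (hlab : ∀ e ∈ E, e.2.1 ∈ D (layer e.1))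
    (hD : ∀ i ∈ Finset.Icc 1 n, (D i).Nonempty)
    (hroot : layer root = 1) (hterm : layer terminal = n + 1)
    (i v : ℕ) (hi : i ∈ Finset.Icc 1 n) (hv : v ∈ D i) :
    (∃ ρ ∈ Sols n D E layer root terminal, ρ i = v) ↔
      ((∃ e, ValidEdge E root terminal e ∧ layer e.1 = i ∧ e.2.1 = v) ∨
        (∃ e, ValidEdge E root terminal e ∧ layer e.1 < i ∧ i < layer e.2.2)) :=
  stmt11_general n D E layer root terminal hlab hD hroot hterm i v hi hv
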